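/- arXiv:2202.02214 — 5 statements merged into one kernel-verified Lean document; each statement's English description precedes it below -/
import Mathlib

section
/- Let r, ε, ρ, e₁, ..., e_k ∈ Z^2 with ⟨ρ, e_i⟩ = −1 for all i, and define homogeneous derivations ∂_{v,w}(χ^m) = ⟨v,m⟩·χ^{m+w} on the Laurent polynomial ring K[x₁^{±1}, x₂^{±1}]. Then the iterated commutator [ ... [[∂_{r,ε}, ∂_{ρ,e₁}], ∂_{ρ,e₂}], ..., ∂_{ρ,e_k}] equals ∂_{f,s} where s = ε + e₁ + ... + e_k and f = (−1)^{k+1}( ⟨ρ,ε⟩^{\underline{k−1}} · ⟨r, e₁+...+e_k⟩ · ρ − ⟨ρ,ε⟩^{\underline{k}} · r ), with x^{\underline{j}} = x(x−1)···(x−j+1) the falling factorial. -/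
/-- Standard pairing on the lattice `ℤ × ℤ`. -/
def pairZ (v m : ℤ × ℤ) : ℤ := v.1 * m.1 + v.2 * m.2

/-!
Homogeneous derivations are closed under brackets:
`[∂_{f,s}, ∂_{ρ,e}] = ∂_{⟨f,e⟩ρ - ⟨ρ,s⟩f, s+e}`. After `j` brackets the degree is
`ε + e₁ + ⋯ + e_j`, whose pairing with `ρ` is `⟨ρ,ε⟩ - j` because `⟨ρ,eᵢ⟩ = -1`. Hence each further
bracket multiplies the coefficient of `r` by `-(⟨ρ,ε⟩ - j)`, building the falling factorial, and the
coefficient of `ρ` obeys a first-order linear recursion whose solution is the stated closed form.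
-/

open AddMonoidAlgebra

@[simp]
lemma pairZ_zero_right (v : ℤ × ℤ) : pairZ v 0 = 0 := by
  simp [pairZ]

lemma pairZ_add_right (v a b : ℤ × ℤ) : pairZ v (a + b) = pairZ v a + pairZ v b := by
  simp only [pairZ, Prod.fst_add, Prod.snd_add]; ring

lemma pairZ_sum_right {ι : Type*} (s : Finset ι) (v : ℤ × ℤ) (a : ι → ℤ × ℤ) :
    pairZ v (∑ i ∈ s, a i) = ∑ i ∈ s, pairZ v (a i) :=
  map_sum (AddMonoidHom.mk' (pairZ v) (pairZ_add_right v)) a s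

lemma pairZ_smul_left (c : ℤ) (v m : ℤ × ℤ) : pairZ (c • v) m = c * pairZ v m := by
  simp only [pairZ, Prod.smul_fst, Prod.smul_snd, smul_eq_mul]; ring

lemma pairZ_sub_left (v w m : ℤ × ℤ) : pairZ (v - w) m = pairZ v m - pairZ w m := by
  simp only [pairZ, Prod.fst_sub, Prod.snd_sub]; ring

section

variable {K : Type*} [Ring K]

def IsHomogeneousDerivation (A : Module.End K K[ℤ × ℤ]) (v w : ℤ × ℤ) : Prop :=
  ∀ m : ℤ × ℤ, A (single m 1) = pairZ v m • single (m + w) (1 : K)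

theorem IsHomogeneousDerivation.commutator {A B : Module.End K K[ℤ × ℤ]} {f s ρ e : ℤ × ℤ}
    (hA : IsHomogeneousDerivation A f s) (hB : IsHomogeneousDerivation B ρ e) :
    IsHomogeneousDerivation (A * B - B * A) (pairZ f e • ρ - pairZ ρ s • f) (s + e) := by
  intro m
  rw [LinearMap.sub_apply, Module.End.mul_apply, Module.End.mul_apply, hA, hB, map_zsmul,
    map_zsmul, hA, hB, smul_smul, smul_smul, add_right_comm, ← add_assoc, ← sub_smul]
  congr 1
  simp only [pairZ, Prod.fst_add, Prod.snd_add, Prod.smul_fst, Prod.smul_snd, Prod.fst_sub,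
    Prod.snd_sub, smul_eq_mul]
  ring

theorem IsHomogeneousDerivation.foldl_commutator {n : ℕ} {D0 : Module.End K K[ℤ × ℤ]}
    {D : Fin (n + 1) → Module.End K K[ℤ × ℤ]} {r ε ρ : ℤ × ℤ} {e : Fin (n + 1) → ℤ × ℤ}
    (he : ∀ i, pairZ ρ (e i) = -1) (h0 : IsHomogeneousDerivation D0 r ε)
    (h : ∀ i, IsHomogeneousDerivation (D i) ρ (e i)) :
    IsHomogeneousDerivation ((List.ofFn D).foldl (fun A B => A * B - B * A) D0)
      ((-1 : ℤ) ^ (n + 2) •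
        (((descPochhammer ℤ n).eval (pairZ ρ ε) * pairZ r (∑ i, e i)) • ρ
          - (descPochhammer ℤ (n + 1)).eval (pairZ ρ ε) • r))
      (ε + ∑ i, e i) := by
  induction n with
  | zero =>
    convert h0.commutator (h 0) using 2 <;> simp [descPochhammer_one]
  | succ n ih =>
    rw [List.ofFn_succ', List.concat_eq_append, List.foldl_concat]
    convert (ih (fun i => he i.castSucc) fun i => h i.castSucc).commutator (h (Fin.last _))
      using 1
    · have hρS : pairZ ρ (ε + ∑ i : Fin (n + 1), e i.castSucc) = pairZ ρ ε - (n + 1) := by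
        simp [pairZ_add_right, pairZ_sum_right, he, sub_eq_add_neg]
      have hP₁ := descPochhammer_succ_eval n (pairZ ρ ε)
      have hP₂ := descPochhammer_succ_eval (n + 1) (pairZ ρ ε)
      rw [hρS, Fin.sum_univ_castSucc, pairZ_add_right, pairZ_smul_left, pairZ_sub_left,
        pairZ_smul_left, pairZ_smul_left, he, hP₂, hP₁]
      ext <;> simp only [Prod.smul_fst, Prod.smul_snd, Prod.fst_sub, Prod.snd_sub,
        smul_eq_mul, Nat.cast_succ] <;> ring
    · rw [Fin.sum_univ_castSucc, add_assoc]

end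

theorem stmt_5_general (K : Type*) [Field K] (k : ℕ)
    (r ε ρ : ℤ × ℤ) (e : Fin k → ℤ × ℤ) (he : ∀ i, pairZ ρ (e i) = -1)
    (D0 : Module.End K (AddMonoidAlgebra K (ℤ × ℤ)))
    (D : Fin k → Module.End K (AddMonoidAlgebra K (ℤ × ℤ)))
    (h0 : ∀ m : ℤ × ℤ, D0 (AddMonoidAlgebra.single m 1) = pairZ r m • AddMonoidAlgebra.single (m + ε) (1 : K))
    (h : ∀ i, ∀ m : ℤ × ℤ,
      D i (AddMonoidAlgebra.single m 1) = pairZ ρ m • AddMonoidAlgebra.single (m + e i) (1 : K)) :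
    ∀ m : ℤ × ℤ,
      ((List.ofFn D).foldl (fun A B => A * B - B * A) D0) (AddMonoidAlgebra.single m 1)
        = pairZ (((-1 : ℤ) ^ (k + 1)) •
            (((descPochhammer ℤ (k - 1)).eval (pairZ ρ ε) * pairZ r (∑ i, e i)) • ρ
              - ((descPochhammer ℤ k).eval (pairZ ρ ε)) • r)) m •
          AddMonoidAlgebra.single (m + (ε + ∑ i, e i)) (1 : K) := by
  cases k with
  | zero => simpa using h0
  | succ n => exact IsHomogeneousDerivation.foldl_commutator he h0 h

theorem stmt_5 (K : Type*) [Field K] [CharZero K] (k : ℕ) (hk : 0 < k)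
    (r ε ρ : ℤ × ℤ) (e : Fin k → ℤ × ℤ) (he : ∀ i, pairZ ρ (e i) = -1)
    (D0 : Module.End K (AddMonoidAlgebra K (ℤ × ℤ)))
    (D : Fin k → Module.End K (AddMonoidAlgebra K (ℤ × ℤ)))
    (h0 : ∀ m : ℤ × ℤ, D0 (AddMonoidAlgebra.single m 1) = pairZ r m • AddMonoidAlgebra.single (m + ε) (1 : K))
    (h : ∀ i, ∀ m : ℤ × ℤ,
      D i (AddMonoidAlgebra.single m 1) = pairZ ρ m • AddMonoidAlgebra.single (m + e i) (1 : K)) :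
    ∀ m : ℤ × ℤ,
      ((List.ofFn D).foldl (fun A B => A * B - B * A) D0) (AddMonoidAlgebra.single m 1)
        = pairZ (((-1 : ℤ) ^ (k + 1)) •
            (((descPochhammer ℤ (k - 1)).eval (pairZ ρ ε) * pairZ r (∑ i, e i)) • ρ
              - ((descPochhammer ℤ k).eval (pairZ ρ ε)) • r)) m •
          AddMonoidAlgebra.single (m + (ε + ∑ i, e i)) (1 : K) :=
  stmt_5_general K k r ε ρ e he D0 D h0 h
end

section
/- Let K be a field of characteristic zero containing a primitive m-th root of unity ω for some integer m > 1. Suppose d₁, ..., d_k are positive integers with m dividing d_i − 1 for every i. Then the subset S = {(P, ωP) : P ∈ K²} of K² × K² (where ω acts diagonally on coordinates) is invariant under the diagonal action of every automorphism of the form (x,y) ↦ (x + α y, y) with α ∈ K and every automorphism of the form (x,y) ↦ (x, y + β x^{d_i}) with β ∈ K. Consequently the group generated by these automorphisms does not act 2-transitively on K² \ {0}. -/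
/-!
Scalar multiplication by `ω` commutes with every shear `(x, y) ↦ (x + α y, y)`, and, because
`ω ^ dᵢ = ω`, with every triangular map `(x, y) ↦ (x, y + β x ^ dᵢ)`. Hence the whole group
generated by them lies in the centralizer of `P ↦ ω • P` and preserves the set of pairs
`(P, ω • P)`. A group element fixing `(1, 0)` must then fix `(ω, 0)` as well, so it cannot send
the pair `((1, 0), (ω, 0))` to `((1, 0), (0, 1))`.
-/

theorem pow_eq_self_of_dvd_sub_one {M : Type*} [Monoid M] {x : M} {m n : ℕ} (hx : x ^ m = 1)
    (h : (m : ℤ) ∣ n - 1) : x ^ n = x := by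
  simpa using pow_eq_pow_of_modEq (Nat.modEq_iff_dvd.2 h).symm hx

section Shears

variable {R : Type*} [CommRing R]

def shearGenerators {k : ℕ} (d : Fin k → ℕ) : Set (Equiv.Perm (R × R)) :=
  {σ | (∃ α : R, ∀ p : R × R, σ p = (p.1 + α * p.2, p.2)) ∨
    (∃ (β : R) (i : Fin k), ∀ p : R × R, σ p = (p.1, p.2 + β * p.1 ^ (d i)))}

theorem map_smul_of_mem_shearGenerators {k : ℕ} {d : Fin k → ℕ} {c : R}
    (hc : ∀ i, c ^ d i = c) {σ : Equiv.Perm (R × R)} (hσ : σ ∈ shearGenerators d)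
    (P : R × R) : σ (c • P) = c • σ P := by
  obtain ⟨α, hσ⟩ | ⟨β, i, hσ⟩ := hσ
  · simp only [hσ, Prod.smul_fst, Prod.smul_snd, Prod.smul_mk, smul_eq_mul]
    ext <;> ring
  · simp only [hσ, Prod.smul_fst, Prod.smul_snd, Prod.smul_mk, smul_eq_mul, mul_pow, hc i]
    ext <;> ring

theorem map_smul_of_mem_closure_shearGenerators {k : ℕ} {d : Fin k → ℕ} (u : Rˣ)
    (hu : ∀ i, (u : R) ^ d i = u) {σ : Equiv.Perm (R × R)}
    (hσ : σ ∈ Subgroup.closure (shearGenerators (R := R) d)) (P : R × R) :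
    σ ((u : R) • P) = (u : R) • σ P := by
  have hle : Subgroup.closure (shearGenerators (R := R) d) ≤
      Subgroup.centralizer {MulAction.toPerm u} := by
    refine (Subgroup.closure_le _).2 fun τ hτ ↦ Subgroup.mem_centralizer_singleton_iff.2 ?_
    ext1 Q
    exact map_smul_of_mem_shearGenerators hu hτ Q
  exact Equiv.congr_fun (Subgroup.mem_centralizer_singleton_iff.1 (hle hσ)) P

end Shears

theorem stmt_7_general (K : Type*) [Field K] (m : ℕ) (hm : 1 < m)
    (ω : K) (hω : IsPrimitiveRoot ω m) (k : ℕ) (d : Fin k → ℕ)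
    (hdiv : ∀ i, (m : ℤ) ∣ (d i : ℤ) - 1) :
    (∀ σ ∈ ({σ : Equiv.Perm (K × K) |
        (∃ α : K, ∀ p : K × K, σ p = (p.1 + α * p.2, p.2)) ∨
        (∃ (β : K) (i : Fin k), ∀ p : K × K, σ p = (p.1, p.2 + β * p.1 ^ (d i)))} :
          Set (Equiv.Perm (K × K))),
      ∀ q ∈ {q : (K × K) × (K × K) | ∃ P : K × K, q = (P, (ω * P.1, ω * P.2))},
        ((σ q.1, σ q.2) : (K × K) × (K × K)) ∈
          {q : (K × K) × (K × K) | ∃ P : K × K, q = (P, (ω * P.1, ω * P.2))}) ∧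
    ¬ (∀ P₁ P₂ Q₁ Q₂ : K × K, P₁ ≠ 0 → P₂ ≠ 0 → Q₁ ≠ 0 → Q₂ ≠ 0 → P₁ ≠ P₂ → Q₁ ≠ Q₂ →
        ∃ σ ∈ Subgroup.closure ({σ : Equiv.Perm (K × K) |
            (∃ α : K, ∀ p : K × K, σ p = (p.1 + α * p.2, p.2)) ∨
            (∃ (β : K) (i : Fin k), ∀ p : K × K, σ p = (p.1, p.2 + β * p.1 ^ (d i)))}),
          σ P₁ = Q₁ ∧ σ P₂ = Q₂) := by
  have hω_pow : ∀ i, ω ^ d i = ω := fun i ↦ pow_eq_self_of_dvd_sub_one hω.pow_eq_one (hdiv i)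
  have hω0 : ω ≠ 0 := hω.ne_zero (by omega)
  refine ⟨fun σ hσ q ⟨P, hq⟩ ↦ ⟨σ P, ?_⟩, fun h ↦ ?_⟩
  · subst hq
    exact congrArg _ (map_smul_of_mem_shearGenerators (c := ω) hω_pow hσ P)
  · obtain ⟨σ, hσ, h₁, h₂⟩ := h (1, 0) (ω, 0) (1, 0) (0, 1) (by simp) (by simp [hω0])
      (by simp) (by simp) (by simpa using (hω.ne_one hm).symm) (by simp)
    have := map_smul_of_mem_closure_shearGenerators (Units.mk0 ω hω0) hω_pow hσ (1, 0)
    simp [h₁, h₂] at this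

theorem stmt_7 (K : Type*) [Field K] [CharZero K] (m : ℕ) (hm : 1 < m)
    (ω : K) (hω : IsPrimitiveRoot ω m) (k : ℕ) (d : Fin k → ℕ)
    (hd : ∀ i, 0 < d i) (hdiv : ∀ i, (m : ℤ) ∣ (d i : ℤ) - 1) :
    (∀ σ ∈ ({σ : Equiv.Perm (K × K) |
        (∃ α : K, ∀ p : K × K, σ p = (p.1 + α * p.2, p.2)) ∨
        (∃ (β : K) (i : Fin k), ∀ p : K × K, σ p = (p.1, p.2 + β * p.1 ^ (d i)))} :
          Set (Equiv.Perm (K × K))),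
      ∀ q ∈ {q : (K × K) × (K × K) | ∃ P : K × K, q = (P, (ω * P.1, ω * P.2))},
        ((σ q.1, σ q.2) : (K × K) × (K × K)) ∈
          {q : (K × K) × (K × K) | ∃ P : K × K, q = (P, (ω * P.1, ω * P.2))}) ∧
    ¬ (∀ P₁ P₂ Q₁ Q₂ : K × K, P₁ ≠ 0 → P₂ ≠ 0 → Q₁ ≠ 0 → Q₂ ≠ 0 → P₁ ≠ P₂ → Q₁ ≠ Q₂ →
        ∃ σ ∈ Subgroup.closure ({σ : Equiv.Perm (K × K) |
            (∃ α : K, ∀ p : K × K, σ p = (p.1 + α * p.2, p.2)) ∨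
            (∃ (β : K) (i : Fin k), ∀ p : K × K, σ p = (p.1, p.2 + β * p.1 ^ (d i)))}),
          σ P₁ = Q₁ ∧ σ P₂ = Q₂) :=
  stmt_7_general K m hm ω hω k d hdiv
end

section
/- Let m > 1 be an integer and ω a primitive m-th root of unity in a field K of characteristic zero. Let e₁, ..., e_k be vectors (a_i, −1) and ε₁, ..., ε_l be vectors (−1, b_j) in Z² (with a_i, b_j ≥ 0), and suppose m equals the index of Z⟨e₁,...,e_k, ε₁,...,ε_l⟩ in Z². Then the set S = {((z,w), (ωz, ω^{a₁}w)) : (z,w) ∈ K²} ⊆ K² × K² is invariant under the diagonal action of every automorphism H_{b_j}(α): (x,y) ↦ (x + α y^{b_j}, y) and every automorphism K_{a_i}(β): (x,y) ↦ (x, y + β x^{a_i}), for all α, β ∈ K. -/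
/-!
Let `H ≤ ℤ²` be the lattice spanned by the `e_i = (a_i, -1)` and `ε_j = (-1, b_j)`. Modulo `H`
we have `(0, 1) ≡ a_i • (1, 0)`, so `ℤ² ⧸ H` is cyclic, generated by the class of `(1, 0)`, whose
order is therefore the index `m`. Since `(a_i - a_0, 0) = e_i - e_0` and
`(a_i b_j - 1, 0) = b_j • e_i + ε_j` lie in `H`, we get `a_i ≡ a_0` and `a_i b_j ≡ 1` modulo `m`,
hence `ω ^ a_i = ω ^ a_0` and `(ω ^ a_0) ^ b_j = ω`. These two identities are exactly what makes
the shears `(x, y) ↦ (x + α y ^ b_j, y)` and `(x, y) ↦ (x, y + β x ^ a_i)` commute with the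
diagonal map `(z, w) ↦ (ω z, ω ^ a_0 w)`, whose graph is the set in question.
-/

namespace AddSubgroup

lemma index_dvd_of_mk_zero_mem {H : AddSubgroup (ℤ × ℤ)} {a c : ℤ} (ha : (a, -1) ∈ H)
    (hc : (c, 0) ∈ H) : (H.index : ℤ) ∣ c := by
  set e : (ℤ × ℤ) ⧸ H := QuotientAddGroup.mk (1, 0)
  have hgen : ∀ x : (ℤ × ℤ) ⧸ H, x ∈ zmultiples e := by
    rintro ⟨p, q⟩
    refine ⟨p + q * a, QuotientAddGroup.eq_iff_sub_mem.mpr ?_⟩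
    have : (p + q * a) • ((1, 0) : ℤ × ℤ) - (p, q) = q • (a, -1) := by
      ext <;> simp
    rw [this]
    exact zsmul_mem ha _
  have horder : addOrderOf e = H.index :=
    addOrderOf_eq_card_of_forall_mem_zmultiples hgen
  rw [← horder, addOrderOf_dvd_iff_zsmul_eq_zero, ← QuotientAddGroup.mk_zsmul,
    QuotientAddGroup.eq_zero_iff]
  simpa using hc

end AddSubgroup

def diagGraph {R : Type*} [Mul R] (u v : R) : Set ((R × R) × (R × R)) :=
  {q | ∃ z w, q = ((z, w), (u * z, v * w))}

section Shear

variable {R : Type*} [CommSemiring R] {u v : R} {n : ℕ} {q : (R × R) × (R × R)}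

lemma shearFst_mem_diagGraph (h : v ^ n = u) (α : R) (hq : q ∈ diagGraph u v) :
    ((q.1.1 + α * q.1.2 ^ n, q.1.2), (q.2.1 + α * q.2.2 ^ n, q.2.2)) ∈ diagGraph u v := by
  obtain ⟨z, w, rfl⟩ := hq
  refine ⟨z + α * w ^ n, w, ?_⟩
  rw [mul_pow, h, mul_add, mul_left_comm]

lemma shearSnd_mem_diagGraph (h : u ^ n = v) (β : R) (hq : q ∈ diagGraph u v) :
    ((q.1.1, q.1.2 + β * q.1.1 ^ n), (q.2.1, q.2.2 + β * q.2.1 ^ n)) ∈ diagGraph u v := by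
  obtain ⟨z, w, rfl⟩ := hq
  refine ⟨z, w + β * z ^ n, ?_⟩
  rw [mul_pow, h, mul_add, mul_left_comm]

end Shear

lemma pow_eq_pow_of_intCast_dvd_sub {M : Type*} [Monoid M] {x : M} {m n₁ n₂ : ℕ}
    (hx : x ^ m = 1) (h : (m : ℤ) ∣ (n₂ : ℤ) - n₁) : x ^ n₁ = x ^ n₂ :=
  pow_eq_pow_of_modEq (Nat.modEq_iff_dvd.mpr h) hx

theorem stmt_9_general (K : Type*) [Field K] (m : ℕ)
    (ω : K) (hω : IsPrimitiveRoot ω m)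
    (k l : ℕ) (a : Fin (k + 1) → ℕ) (b : Fin l → ℕ)
    (hidx : (AddSubgroup.closure
      ((Set.range fun i : Fin (k + 1) => (((a i : ℤ), -1) : ℤ × ℤ)) ∪
       (Set.range fun j : Fin l => (((-1 : ℤ), (b j : ℤ)) : ℤ × ℤ)))).index = m) :
    (∀ (α : K) (j : Fin l),
      ∀ q ∈ {q : (K × K) × (K × K) | ∃ z w : K, q = ((z, w), (ω * z, ω ^ (a 0) * w))},
        ((((q.1.1 + α * q.1.2 ^ (b j), q.1.2) : K × K),
          ((q.2.1 + α * q.2.2 ^ (b j), q.2.2) : K × K)) : (K × K) × (K × K)) ∈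
          {q : (K × K) × (K × K) | ∃ z w : K, q = ((z, w), (ω * z, ω ^ (a 0) * w))}) ∧
    (∀ (β : K) (i : Fin (k + 1)),
      ∀ q ∈ {q : (K × K) × (K × K) | ∃ z w : K, q = ((z, w), (ω * z, ω ^ (a 0) * w))},
        ((((q.1.1, q.1.2 + β * q.1.1 ^ (a i)) : K × K),
          ((q.2.1, q.2.2 + β * q.2.1 ^ (a i)) : K × K)) : (K × K) × (K × K)) ∈
          {q : (K × K) × (K × K) | ∃ z w : K, q = ((z, w), (ω * z, ω ^ (a 0) * w))}) := by
  set H := AddSubgroup.closure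
      ((Set.range fun i : Fin (k + 1) => (((a i : ℤ), -1) : ℤ × ℤ)) ∪
       (Set.range fun j : Fin l => (((-1 : ℤ), (b j : ℤ)) : ℤ × ℤ)))
  have he : ∀ i, (((a i : ℤ), -1) : ℤ × ℤ) ∈ H := fun i =>
    AddSubgroup.subset_closure (Or.inl ⟨i, rfl⟩)
  have hε : ∀ j, (((-1 : ℤ), (b j : ℤ)) : ℤ × ℤ) ∈ H := fun j =>
    AddSubgroup.subset_closure (Or.inr ⟨j, rfl⟩)
  have hωm : ω ^ H.index = 1 := hidx ▸ hω.pow_eq_one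
  have hab : ∀ i j, ω ^ 1 = ω ^ (a i * b j) := fun i j =>
    pow_eq_pow_of_intCast_dvd_sub hωm <| AddSubgroup.index_dvd_of_mk_zero_mem (he 0) <| by
      convert add_mem (zsmul_mem (he i) (b j)) (hε j) using 1
      ext <;> simp; ring
  have ha : ∀ i, ω ^ a 0 = ω ^ a i := fun i =>
    pow_eq_pow_of_intCast_dvd_sub hωm <| AddSubgroup.index_dvd_of_mk_zero_mem (he 0) <| by
      convert sub_mem (he i) (he 0) using 1
      ext <;> simp
  exact ⟨fun α j q => shearFst_mem_diagGraph (by rw [← pow_mul, ← hab 0 j, pow_one]) α,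
    fun β i q => shearSnd_mem_diagGraph (ha i).symm β⟩

theorem stmt_9 (K : Type*) [Field K] [CharZero K] (m : ℕ) (hm : 1 < m)
    (ω : K) (hω : IsPrimitiveRoot ω m)
    (k l : ℕ) (a : Fin (k + 1) → ℕ) (b : Fin l → ℕ)
    (hidx : (AddSubgroup.closure
      ((Set.range fun i : Fin (k + 1) => (((a i : ℤ), -1) : ℤ × ℤ)) ∪
       (Set.range fun j : Fin l => (((-1 : ℤ), (b j : ℤ)) : ℤ × ℤ)))).index = m) :
    (∀ (α : K) (j : Fin l),
      ∀ q ∈ {q : (K × K) × (K × K) | ∃ z w : K, q = ((z, w), (ω * z, ω ^ (a 0) * w))},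
        ((((q.1.1 + α * q.1.2 ^ (b j), q.1.2) : K × K),
          ((q.2.1 + α * q.2.2 ^ (b j), q.2.2) : K × K)) : (K × K) × (K × K)) ∈
          {q : (K × K) × (K × K) | ∃ z w : K, q = ((z, w), (ω * z, ω ^ (a 0) * w))}) ∧
    (∀ (β : K) (i : Fin (k + 1)),
      ∀ q ∈ {q : (K × K) × (K × K) | ∃ z w : K, q = ((z, w), (ω * z, ω ^ (a 0) * w))},
        ((((q.1.1, q.1.2 + β * q.1.1 ^ (a i)) : K × K),
          ((q.2.1, q.2.2 + β * q.2.1 ^ (a i)) : K × K)) : (K × K) × (K × K)) ∈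
          {q : (K × K) × (K × K) | ∃ z w : K, q = ((z, w), (ω * z, ω ^ (a 0) * w))}) :=
  stmt_9_general K m ω hω k l a b hidx
end

section
/- Let K be an algebraically closed field of characteristic zero and let s, t be positive integers. Let G be the group of automorphisms of the affine plane A² over K generated by all maps (x,y) ↦ (x + α y^t, y) for α ∈ K together with all maps (x,y) ↦ (x, y + S(x)) where S ∈ K[x] is divisible by x^s. Then G acts infinitely transitively on A² \ {0}: for every m ≥ 1 and any two m-tuples of pairwise distinct points of A² \ {0}, some element of G maps the first tuple to the second. -/
/-!
Call a tuple of points *standard* if its first coordinates are pairwise distinct and nonzero.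
Three shears with generic parameters make any tuple of distinct points of `A² \ {0}` standard:
a horizontal shear makes every `x_i` nonzero, a vertical shear by `c x^s` then separates the
`t`-th powers `y_i^t` of points on a common vertical line, and a second horizontal shear
separates the `x_i`. Each step excludes only finitely many parameters, and `K` is infinite.

Two standard tuples `P`, `Q` are matched by `vertShear S₂ * horizShear t 1 * vertShear S₁`:
choose `w_i` with `w_i ^ t = x(Q_i) - x(P_i)`; Lagrange interpolation at the nonzero nodes
`x(P_i)` gives `S₁` divisible by `X^s` with `S₁(x(P_i)) = w_i - y(P_i)`, the horizontal shear
then sends `(x(P_i), w_i)` to `(x(Q_i), w_i)`, and `S₂` corrects the second coordinates.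
-/

open Polynomial Filter

namespace PlaneShear

variable {K : Type*} [Field K]

def horizShear (t : ℕ) (α : K) : Equiv.Perm (K × K) where
  toFun p := (p.1 + α * p.2 ^ t, p.2)
  invFun p := (p.1 - α * p.2 ^ t, p.2)
  left_inv p := by simp
  right_inv p := by simp

def vertShear (S : K[X]) : Equiv.Perm (K × K) where
  toFun p := (p.1, p.2 + S.eval p.1)
  invFun p := (p.1, p.2 - S.eval p.1)
  left_inv p := by simp
  right_inv p := by simp

@[simp] lemma horizShear_apply (t : ℕ) (α : K) (p : K × K) :
    horizShear t α p = (p.1 + α * p.2 ^ t, p.2) := rfl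

@[simp] lemma vertShear_apply (S : K[X]) (p : K × K) :
    vertShear S p = (p.1, p.2 + S.eval p.1) := rfl

variable (K) in
def shearGroup (s t : ℕ) : Subgroup (Equiv.Perm (K × K)) :=
  Subgroup.closure {σ : Equiv.Perm (K × K) |
    (∃ α : K, ∀ p : K × K, σ p = (p.1 + α * p.2 ^ t, p.2)) ∨
    (∃ S : Polynomial K, (Polynomial.X ^ s ∣ S) ∧ ∀ p : K × K, σ p = (p.1, p.2 + S.eval p.1))}

lemma horizShear_mem_shearGroup (s t : ℕ) (α : K) : horizShear t α ∈ shearGroup K s t :=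
  Subgroup.subset_closure (Or.inl ⟨α, fun _ => rfl⟩)

lemma vertShear_mem_shearGroup (s t : ℕ) {S : K[X]} (hS : X ^ s ∣ S) :
    vertShear S ∈ shearGroup K s t :=
  Subgroup.subset_closure (Or.inr ⟨S, hS, fun _ => rfl⟩)

lemma eventually_cofinite_add_mul_ne_zero {a b : K} (h : a ≠ 0 ∨ b ≠ 0) :
    ∀ᶠ c in cofinite, a + c * b ≠ 0 := by
  rw [eventually_cofinite]
  rcases eq_or_ne b 0 with rfl | hb
  · simp [h.resolve_right (not_not.2 rfl)]
  · refine (Set.finite_singleton (-a / b)).subset fun c hc => ?_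
    simp only [Set.mem_ofPred_eq, not_not] at hc
    rw [Set.mem_singleton_iff, eq_div_iff hb]
    linear_combination hc

lemma eventually_cofinite_pow_ne_pow {t : ℕ} (ht : 0 < t) {x u v : K} (hx : x ≠ 0)
    (huv : u ≠ v) : ∀ᶠ c in cofinite, (u + c * x) ^ t ≠ (v + c * x) ^ t := by
  classical
  -- `(u + c x) / (v + c x)` is a `t`-th root of unity `ζ`, and `c` is determined by `ζ`.
  have hroots : ∀ ζ ∈ (nthRoots t (1 : K)).toFinset,
      ∀ᶠ c in cofinite, (u - ζ * v) + c * (x * (1 - ζ)) ≠ 0 := by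
    refine fun ζ _ => eventually_cofinite_add_mul_ne_zero ?_
    by_cases hζ : ζ = 1
    · exact Or.inl (by simpa [hζ, sub_eq_zero] using huv)
    · exact Or.inr (mul_ne_zero hx (sub_ne_zero.2 (Ne.symm hζ)))
  filter_upwards [(eventually_all_finset _).2 hroots] with c hc hpow
  have hv : v + c * x ≠ 0 := by
    intro hv
    rw [hv, zero_pow ht.ne'] at hpow
    exact huv (by linear_combination (pow_eq_zero_iff ht.ne').1 hpow - hv)
  refine hc ((u + c * x) / (v + c * x)) ?_ ?_
  · rw [Multiset.mem_toFinset, mem_nthRoots ht, div_pow, hpow, div_self (pow_ne_zero t hv)]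
  · field_simp
    ring

section Generic

variable {ι : Type*} [Finite ι] {P : ι → K × K}

lemma eventually_fst_horizShear_ne_zero (t : ℕ) (hP : ∀ i, P i ≠ 0) :
    ∀ᶠ α in cofinite, ∀ i, (horizShear t α (P i)).1 ≠ 0 := by
  refine eventually_all.2 fun i => eventually_cofinite_add_mul_ne_zero ?_
  rcases eq_or_ne (P i).2 0 with hy | hy
  · exact Or.inl fun hx => hP i (Prod.ext hx hy)
  · exact Or.inr (pow_ne_zero t hy)

lemma eventually_snd_vertShear_pow_ne (s : ℕ) {t : ℕ} (ht : 0 < t) (hP : Function.Injective P)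
    (hP0 : ∀ i, (P i).1 ≠ 0) :
    ∀ᶠ c in cofinite, ∀ i j, i ≠ j → (P i).1 = (P j).1 →
      (vertShear (C c * X ^ s) (P i)).2 ^ t ≠ (vertShear (C c * X ^ s) (P j)).2 ^ t := by
  refine eventually_all.2 fun i => eventually_all.2 fun j => ?_
  by_cases h : i ≠ j ∧ (P i).1 = (P j).1
  · have hy : (P i).2 ≠ (P j).2 := fun hy => h.1 (hP (Prod.ext h.2 hy))
    filter_upwards [eventually_cofinite_pow_ne_pow ht (pow_ne_zero s (hP0 i)) hy] with c hc _ _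
    simpa [h.2] using hc
  · exact Eventually.of_forall fun _ hij hx => absurd ⟨hij, hx⟩ h

lemma eventually_fst_horizShear_injective {t : ℕ} (hP0 : ∀ i, (P i).1 ≠ 0)
    (hsep : ∀ i j, i ≠ j → (P i).1 = (P j).1 → (P i).2 ^ t ≠ (P j).2 ^ t) :
    ∀ᶠ β in cofinite, Function.Injective (fun i => (horizShear t β (P i)).1) ∧
      ∀ i, (horizShear t β (P i)).1 ≠ 0 := by
  have hdiff : ∀ i j, i ≠ j → ∀ᶠ β in cofinite,
      ((P i).1 - (P j).1) + β * ((P i).2 ^ t - (P j).2 ^ t) ≠ 0 := fun i j hij => by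
    refine eventually_cofinite_add_mul_ne_zero ?_
    by_cases hx : (P i).1 = (P j).1
    · exact Or.inr (sub_ne_zero.2 (hsep i j hij hx))
    · exact Or.inl (sub_ne_zero.2 hx)
  refine .and ?_ (eventually_all.2 fun i => eventually_cofinite_add_mul_ne_zero (Or.inl (hP0 i)))
  filter_upwards [eventually_all.2 fun i => eventually_all.2 fun j =>
    (eventually_imp_distrib_left.2 (hdiff i j))] with β hβ i j hij
  simp only [horizShear_apply] at hij
  by_contra hne
  exact hβ i j hne (by linear_combination hij)

lemma exists_mem_shearGroup_fst_injective [Infinite K] (s : ℕ) {t : ℕ} (ht : 0 < t)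
    (hP : Function.Injective P) (hP0 : ∀ i, P i ≠ 0) :
    ∃ g ∈ shearGroup K s t,
      Function.Injective (fun i => (g (P i)).1) ∧ ∀ i, (g (P i)).1 ≠ 0 := by
  obtain ⟨α, hα⟩ := (eventually_fst_horizShear_ne_zero t hP0).exists
  obtain ⟨c, hc⟩ :=
    (eventually_snd_vertShear_pow_ne s ht ((horizShear t α).injective.comp hP) hα).exists
  obtain ⟨β, hβ⟩ := (eventually_fst_horizShear_injective
    (P := fun i => vertShear (C c * X ^ s) (horizShear t α (P i))) hα hc).exists
  refine ⟨horizShear t β * vertShear (C c * X ^ s) * horizShear t α, ?_, hβ⟩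
  exact mul_mem (mul_mem (horizShear_mem_shearGroup s t β)
    (vertShear_mem_shearGroup s t (dvd_mul_left _ _))) (horizShear_mem_shearGroup s t α)

end Generic

lemma exists_X_pow_dvd_eval_eq {ι : Type*} [Finite ι] (s : ℕ) {x : ι → K}
    (hx : Function.Injective x) (hx0 : ∀ i, x i ≠ 0) (d : ι → K) :
    ∃ S : K[X], X ^ s ∣ S ∧ ∀ i, S.eval (x i) = d i := by
  classical
  have := Fintype.ofFinite ι
  refine ⟨X ^ s * Lagrange.interpolate Finset.univ x (fun i => d i / x i ^ s),
    dvd_mul_right _ _, fun i => ?_⟩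
  rw [eval_mul, eval_pow, eval_X,
    Lagrange.eval_interpolate_at_node _ hx.injOn (Finset.mem_univ i),
    mul_div_cancel₀ _ (pow_ne_zero s (hx0 i))]

lemma exists_mem_shearGroup_map_eq_of_fst_injective [IsAlgClosed K] {ι : Type*} [Finite ι]
    (s : ℕ) {t : ℕ} (ht : 0 < t) {P Q : ι → K × K}
    (hP : Function.Injective fun i => (P i).1) (hP0 : ∀ i, (P i).1 ≠ 0)
    (hQ : Function.Injective fun i => (Q i).1) (hQ0 : ∀ i, (Q i).1 ≠ 0) :
    ∃ g ∈ shearGroup K s t, ∀ i, g (P i) = Q i := by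
  choose w hw using fun i => IsAlgClosed.exists_pow_nat_eq ((Q i).1 - (P i).1) ht
  obtain ⟨S₁, hS₁, hS₁P⟩ := exists_X_pow_dvd_eval_eq s hP hP0 fun i => w i - (P i).2
  obtain ⟨S₂, hS₂, hS₂Q⟩ := exists_X_pow_dvd_eval_eq s hQ hQ0 fun i => (Q i).2 - w i
  refine ⟨vertShear S₂ * horizShear t 1 * vertShear S₁,
    mul_mem (mul_mem (vertShear_mem_shearGroup s t hS₂) (horizShear_mem_shearGroup s t 1))
      (vertShear_mem_shearGroup s t hS₁), fun i => ?_⟩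
  have hP' : vertShear S₁ (P i) = ((P i).1, w i) := by simp [hS₁P]
  have hPQ : horizShear t 1 ((P i).1, w i) = ((Q i).1, w i) := by simp [hw]
  have hQ' : vertShear S₂ ((Q i).1, w i) = Q i := by simp [hS₂Q]
  simp only [Equiv.Perm.mul_apply, hP', hPQ, hQ']

end PlaneShear

open PlaneShear in
theorem stmt_13_general (K : Type*) [Field K] [IsAlgClosed K] (s t : ℕ)
    (ht : 0 < t) :
    ∀ (m : ℕ), 0 < m → ∀ P Q : Fin m → K × K,
      Function.Injective P → Function.Injective Q →
      (∀ i, P i ≠ 0) → (∀ i, Q i ≠ 0) →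
      ∃ σ ∈ Subgroup.closure ({σ : Equiv.Perm (K × K) |
          (∃ α : K, ∀ p : K × K, σ p = (p.1 + α * p.2 ^ t, p.2)) ∨
          (∃ S : Polynomial K, (Polynomial.X ^ s ∣ S) ∧
            ∀ p : K × K, σ p = (p.1, p.2 + S.eval p.1))}),
        ∀ i, σ (P i) = Q i := by
  intro m _ P Q hP hQ hP0 hQ0
  obtain ⟨g, hg, hgP, hgP0⟩ := exists_mem_shearGroup_fst_injective s ht hP hP0
  obtain ⟨h, hh, hhQ, hhQ0⟩ := exists_mem_shearGroup_fst_injective s ht hQ hQ0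
  obtain ⟨k, hk, hkgh⟩ := exists_mem_shearGroup_map_eq_of_fst_injective s ht hgP hgP0 hhQ hhQ0
  refine ⟨h⁻¹ * k * g, mul_mem (mul_mem (inv_mem hh) hk) hg, fun i => ?_⟩
  rw [Equiv.Perm.mul_apply, Equiv.Perm.mul_apply, hkgh]
  exact h.symm_apply_apply (Q i)

theorem stmt_13 (K : Type*) [Field K] [IsAlgClosed K] [CharZero K] (s t : ℕ)
    (hs : 0 < s) (ht : 0 < t) :
    ∀ (m : ℕ), 0 < m → ∀ P Q : Fin m → K × K,
      Function.Injective P → Function.Injective Q →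
      (∀ i, P i ≠ 0) → (∀ i, Q i ≠ 0) →
      ∃ σ ∈ Subgroup.closure ({σ : Equiv.Perm (K × K) |
          (∃ α : K, ∀ p : K × K, σ p = (p.1 + α * p.2 ^ t, p.2)) ∨
          (∃ S : Polynomial K, (Polynomial.X ^ s ∣ S) ∧
            ∀ p : K × K, σ p = (p.1, p.2 + S.eval p.1))}),
        ∀ i, σ (P i) = Q i :=
  stmt_13_general K s t ht
end

section
/- Let K be an infinite field, s, t positive integers, and let P₁, ..., P_m, P, Q be distinct points of K² \ {0}. Then there exists an automorphism g of K² which is a composition of maps of the forms (x,y) ↦ (x + α y^t, y) (α ∈ K) and (x,y) ↦ (x, y + S(x)) (S ∈ K[x] divisible by x^s) such that g·P_i = P_i for all i and g·P = Q. -/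
/-!
The maps `(x, y) ↦ (x + α y^t, y)` and `(x, y) ↦ (x, y + S(x))` have inverses of the same
shape, so "moving `P` to `Q` while fixing `F`" is an equivalence relation, and it suffices to
move both `P` and `Q` to a common point `(c, 0)` of the `x`-axis. For `c ≠ 0` off the
`x`-coordinates of `F`, an interpolating `S` moves `(c, y)` vertically to any `(c, y')`;
conjugating by a shear turns this into a move from `(a, b)` to `(a + α b^t, 0)`, available
for all but finitely many `α` as soon as no point of `F` above `a` has the same `t`-th power
of its ordinate as `b`. Since shears fix the `x`-axis and vertical shifts preserve abscissas,
"reaching all but finitely many `(c, 0)`" survives conjugation by either, so this separation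
can be arranged first: a shear makes the abscissa nonzero, then a vertical shift by a generic
`σ` separates the `t`-th powers.
-/

open Polynomial Filter

section

variable {K : Type*} [Field K]

def shear (t : ℕ) (α : K) : Function.End (K × K) :=
  fun p => (p.1 + α * p.2 ^ t, p.2)

def vshift (S : K[X]) : Function.End (K × K) :=
  fun p => (p.1, p.2 + S.eval p.1)

variable (K) in
def elementaryMaps (s t : ℕ) : Set (Function.End (K × K)) :=
  Set.range (shear t) ∪ vshift '' {S | X ^ s ∣ S}

lemma shear_mem_closure (s t : ℕ) (α : K) :
    shear t α ∈ Submonoid.closure (elementaryMaps K s t) :=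
  Submonoid.subset_closure (Or.inl ⟨α, rfl⟩)

lemma vshift_mem_closure {s : ℕ} (t : ℕ) {S : K[X]} (hS : X ^ s ∣ S) :
    vshift S ∈ Submonoid.closure (elementaryMaps K s t) :=
  Submonoid.subset_closure (Or.inr ⟨S, hS, rfl⟩)

lemma shear_neg_mul_shear (t : ℕ) (α : K) : shear t (-α) * shear t α = 1 := by
  funext p
  show shear t (-α) (shear t α p) = p
  simp [shear]

lemma vshift_neg_mul_vshift (S : K[X]) : vshift (-S) * vshift S = 1 := by
  funext p
  show vshift (-S) (vshift S p) = p
  simp [vshift]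

lemma exists_mul_eq_one_of_mem_closure {s t : ℕ} {g : Function.End (K × K)}
    (hg : g ∈ Submonoid.closure (elementaryMaps K s t)) :
    ∃ g' ∈ Submonoid.closure (elementaryMaps K s t), g' * g = 1 := by
  induction hg using Submonoid.closure_induction with
  | mem g hg =>
    rcases hg with ⟨α, rfl⟩ | ⟨S, hS, rfl⟩
    · exact ⟨_, shear_mem_closure s t (-α), shear_neg_mul_shear t α⟩
    · exact ⟨_, vshift_mem_closure t (dvd_neg.mpr hS), vshift_neg_mul_vshift S⟩
  | one => exact ⟨1, one_mem _, mul_one 1⟩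
  | mul g h _ _ ihg ihh =>
    obtain ⟨g', hg', hgg'⟩ := ihg
    obtain ⟨h', hh', hhh'⟩ := ihh
    refine ⟨h' * g', mul_mem hh' hg', ?_⟩
    rw [mul_assoc, ← mul_assoc g', hgg', one_mul, hhh']

lemma exists_X_pow_dvd_eval_eq (s : ℕ) (Z : Finset K) {c : K} (d : K) (hc : c ≠ 0)
    (hcZ : c ∉ Z) : ∃ S : K[X], X ^ s ∣ S ∧ S.eval c = d ∧ ∀ z ∈ Z, S.eval z = 0 := by
  have hZ : ∏ z ∈ Z, (c - z) ≠ 0 :=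
    Finset.prod_ne_zero_iff.mpr fun z hz => sub_ne_zero.mpr fun h => hcZ (h ▸ hz)
  refine ⟨X ^ s * (C (d / (c ^ s * ∏ z ∈ Z, (c - z))) * ∏ z ∈ Z, (X - C z)),
    dvd_mul_right _ _, ?_, fun z hz => ?_⟩
  · simp only [eval_mul, eval_pow, eval_X, eval_C, eval_prod, eval_sub]
    field_simp
  · simp only [eval_mul, eval_prod, eval_sub, eval_X, eval_C]
    rw [Finset.prod_eq_zero hz (sub_self z), mul_zero, mul_zero]

lemma eventually_cofinite_add_mul_ne {a b c d : K} (h : a ≠ c ∨ b ≠ d) :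
    ∀ᶠ α in cofinite, a + α * b ≠ c + α * d := by
  refine eventually_cofinite.mpr (Set.Subsingleton.finite fun α₁ h₁ α₂ h₂ => ?_)
  simp only [Set.mem_ofPred_eq, not_not] at h₁ h₂
  have hprod : (α₁ - α₂) * (b - d) = 0 := by linear_combination h₁ - h₂
  rcases mul_eq_zero.mp hprod with h12 | hbd
  · exact sub_eq_zero.mp h12
  · have hbd := sub_eq_zero.mp hbd
    exact absurd (by linear_combination h₁ - α₁ * hbd) (h.resolve_right (not_not.mpr hbd))

lemma eventually_cofinite_add_pow_ne {t : ℕ} (ht : 0 < t) {a b : K} (hab : a ≠ b) :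
    ∀ᶠ σ in cofinite, (a + σ) ^ t ≠ (b + σ) ^ t := by
  have hp : ((C a + X) ^ t - (C b + X) ^ t : K[X]) ≠ 0 := by
    intro h
    have h2 := congrArg (eval (-b)) h
    simp only [eval_sub, eval_pow, eval_add, eval_C, eval_X, add_neg_cancel,
      zero_pow ht.ne', sub_zero, eval_zero] at h2
    exact hab (by linear_combination (pow_eq_zero_iff ht.ne').mp h2)
  refine eventually_cofinite.mpr ((Polynomial.finite_setOfPred_isRoot hp).subset fun σ hσ => ?_)
  simp only [Set.mem_ofPred_eq, not_not] at hσ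
  simp [Polynomial.IsRoot, hσ]

def MovesFixing (s t : ℕ) (F : Set (K × K)) (P Q : K × K) : Prop :=
  ∃ g ∈ Submonoid.closure (elementaryMaps K s t), (∀ p ∈ F, g p = p) ∧ g P = Q

variable {s t : ℕ} {F : Set (K × K)} {P Q R : K × K}

namespace MovesFixing

lemma trans (hPQ : MovesFixing s t F P Q) (hQR : MovesFixing s t F Q R) :
    MovesFixing s t F P R := by
  obtain ⟨g, hg, hgF, rfl⟩ := hPQ
  obtain ⟨h, hh, hhF, rfl⟩ := hQR
  refine ⟨h * g, mul_mem hh hg, fun p hp => ?_, rfl⟩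
  change h (g p) = p
  rw [hgF p hp, hhF p hp]

lemma symm (h : MovesFixing s t F P Q) : MovesFixing s t F Q P := by
  obtain ⟨g, hg, hgF, rfl⟩ := h
  obtain ⟨g', hg', hg'g⟩ := exists_mul_eq_one_of_mem_closure hg
  have hinv : ∀ p, g' (g p) = p := fun p => congrFun hg'g p
  exact ⟨g', hg', fun p hp => by simpa [hgF p hp] using hinv p, hinv P⟩

lemma of_conj {h h' : Function.End (K × K)}
    (hh : h ∈ Submonoid.closure (elementaryMaps K s t))
    (hh' : h' ∈ Submonoid.closure (elementaryMaps K s t)) (hinv : h' * h = 1)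
    (hmove : MovesFixing s t (h '' F) (h P) Q) : MovesFixing s t F P (h' Q) := by
  obtain ⟨g, hg, hgF, rfl⟩ := hmove
  refine ⟨h' * g * h, mul_mem (mul_mem hh' hg) hh, fun p hp => ?_, rfl⟩
  change h' (g (h p)) = p
  rw [hgF _ (Set.mem_image_of_mem h hp)]
  exact congrFun hinv p

lemma vertical (hF : F.Finite) {c : K} (hc : c ≠ 0) (hcF : ∀ p ∈ F, p.1 ≠ c) (y y' : K) :
    MovesFixing s t F (c, y) (c, y') := by
  have hcZ : c ∉ (hF.image Prod.fst).toFinset := by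
    simpa using fun y hy => hcF _ hy rfl
  obtain ⟨S, hS, hSc, hSF⟩ := exists_X_pow_dvd_eval_eq s _ (y' - y) hc hcZ
  refine ⟨vshift S, vshift_mem_closure t hS, fun p hp => ?_, ?_⟩
  · have hSp := hSF p.1 (by simpa using ⟨p.2, hp⟩)
    simp [vshift, hSp]
  · simp [vshift, hSc]

lemma via_shear (hF : F.Finite) {a b : K} (α : K) (hc : a + α * b ^ t ≠ 0)
    (hsep : ∀ p ∈ F, p.1 + α * p.2 ^ t ≠ a + α * b ^ t) (b' : K) :
    MovesFixing s t F (a, b) (a + α * b ^ t - α * b' ^ t, b') := by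
  have hmove := of_conj (P := (a, b)) (shear_mem_closure s t α)
    (shear_mem_closure s t (-α)) (shear_neg_mul_shear t α)
    (vertical (hF.image (shear t α)) hc (by rintro _ ⟨p, hp, rfl⟩; exact hsep p hp) b b')
  convert hmove using 1
  simp only [shear, Prod.mk.injEq, and_true]
  ring

end MovesFixing

lemma eventually_movesFixing_axis_of_separated (ht : 0 < t) (hF : F.Finite) {a b : K}
    (hb : b ≠ 0) (hsep : ∀ p ∈ F, p.1 = a → p.2 ^ t ≠ b ^ t) :
    ∀ᶠ c in cofinite, MovesFixing s t F (a, b) (c, 0) := by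
  have hbt : b ^ t ≠ 0 := pow_ne_zero t hb
  have hα : ∀ᶠ α in cofinite, MovesFixing s t F (a, b) (a + α * b ^ t, 0) := by
    filter_upwards [eventually_cofinite_add_mul_ne (c := 0) (d := 0) (Or.inr hbt),
      hF.eventually_all.mpr fun p hp => eventually_cofinite_add_mul_ne
        (or_iff_not_imp_left.mpr fun h => hsep p hp (not_not.mp h))] with α h0 hsepα
    simpa [zero_pow ht.ne'] using MovesFixing.via_shear hF α (by simpa using h0) hsepα 0
  have hinj : Function.Injective fun c : K => (c - a) / b ^ t := fun c c' h => by
    simpa [div_left_inj' hbt] using h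
  filter_upwards [hinj.tendsto_cofinite.eventually hα] with c hc
  simpa [div_mul_cancel₀ _ hbt] using hc

lemma eventually_movesFixing_axis_of_shear_image (ht : 0 < t) (β : K)
    (h : ∀ᶠ c in cofinite, MovesFixing s t (shear t β '' F) (shear t β P) (c, 0)) :
    ∀ᶠ c in cofinite, MovesFixing s t F P (c, 0) := by
  filter_upwards [h] with c hc
  simpa [shear, zero_pow ht.ne'] using MovesFixing.of_conj (shear_mem_closure s t β)
    (shear_mem_closure s t (-β)) (shear_neg_mul_shear t β) hc

lemma eventually_movesFixing_axis_of_vshift_image (hF : F.Finite) {S : K[X]} (hS : X ^ s ∣ S)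
    (h : ∀ᶠ c in cofinite, MovesFixing s t (vshift S '' F) (vshift S P) (c, 0)) :
    ∀ᶠ c in cofinite, MovesFixing s t F P (c, 0) := by
  filter_upwards [h, eventually_cofinite_ne 0, (hF.image Prod.fst).eventually_cofinite_notMem]
    with c hc hc0 hcF
  have hmove := MovesFixing.of_conj (vshift_mem_closure t hS)
    (vshift_mem_closure t (dvd_neg.mpr hS)) (vshift_neg_mul_vshift S) hc
  exact hmove.trans (MovesFixing.vertical hF hc0 (fun p hp h => hcF ⟨p, hp, h⟩) _ 0)

lemma eventually_movesFixing_axis_of_fst_ne_zero [Infinite K] (ht : 0 < t) (hF : F.Finite)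
    (hPF : P ∉ F) (hP : P.1 ≠ 0) : ∀ᶠ c in cofinite, MovesFixing s t F P (c, 0) := by
  obtain ⟨a, b⟩ := P
  have hσ : ∀ p ∈ F, ∀ᶠ σ in cofinite, p.1 = a → (p.2 + σ) ^ t ≠ (b + σ) ^ t := by
    intro p hp
    by_cases hpa : p.1 = a
    · have hpb : p.2 ≠ b := fun hpb => hPF (by rw [← hpa, ← hpb]; exact hp)
      exact (eventually_cofinite_add_pow_ne ht hpb).mono fun σ hσ _ => hσ
    · exact Eventually.of_forall fun σ h => absurd h hpa
  obtain ⟨σ, hσ0, hσF⟩ :=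
    ((eventually_cofinite_ne (-b)).and (hF.eventually_all.mpr hσ)).exists
  set S : K[X] := C (σ / a ^ s) * X ^ s
  have hSa : S.eval a = σ := by
    simp only [S, eval_mul, eval_C, eval_pow, eval_X]
    exact div_mul_cancel₀ σ (pow_ne_zero s hP)
  refine eventually_movesFixing_axis_of_vshift_image hF (S := S) (dvd_mul_left _ _) ?_
  have hP' : vshift S (a, b) = (a, b + σ) := by simp [vshift, hSa]
  rw [hP']
  refine eventually_movesFixing_axis_of_separated ht (hF.image _) ?_ ?_
  · exact fun h => hσ0 (by linear_combination h)
  · rintro _ ⟨p, hp, rfl⟩ hpa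
    simp only [vshift] at hpa ⊢
    rw [hpa, hSa]
    exact hσF p hp hpa

lemma eventually_movesFixing_axis [Infinite K] (ht : 0 < t) (hF : F.Finite) (hPF : P ∉ F)
    (hP : P ≠ 0) : ∀ᶠ c in cofinite, MovesFixing s t F P (c, 0) := by
  by_cases hP1 : P.1 = 0
  · have hP2 : P.2 ≠ 0 := fun h => hP (Prod.ext hP1 h)
    have hinj : Function.Injective (shear t (1 : K)) :=
      Function.LeftInverse.injective (g := shear t (-1)) (congrFun (shear_neg_mul_shear t 1))
    refine eventually_movesFixing_axis_of_shear_image ht 1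
      (eventually_movesFixing_axis_of_fst_ne_zero ht (hF.image _)
        (hinj.mem_set_image.not.mpr hPF) ?_)
    simpa [shear, hP1] using pow_ne_zero t hP2
  · exact eventually_movesFixing_axis_of_fst_ne_zero ht hF hPF hP1

end

theorem stmt_14_general (K : Type*) [Field K] [Infinite K] (s t : ℕ) (ht : 0 < t)
    (m : ℕ) (Pts : Fin m → K × K) (P Q : K × K)
    (hPtsP : ∀ i, Pts i ≠ P) (hPtsQ : ∀ i, Pts i ≠ Q)
    (hP0 : P ≠ 0) (hQ0 : Q ≠ 0) :
    ∃ g ∈ Submonoid.closure ({g : Function.End (K × K) |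
        (∃ α : K, ∀ p : K × K, g p = (p.1 + α * p.2 ^ t, p.2)) ∨
        (∃ S : Polynomial K, (Polynomial.X ^ s ∣ S) ∧
          ∀ p : K × K, g p = (p.1, p.2 + S.eval p.1))}),
      (∀ i, g (Pts i) = Pts i) ∧ g P = Q := by
  have hF := Set.finite_range Pts
  have hP := eventually_movesFixing_axis (s := s) ht hF (by simpa using hPtsP) hP0
  have hQ := eventually_movesFixing_axis (s := s) ht hF (by simpa using hPtsQ) hQ0
  obtain ⟨c, hPc, hQc⟩ := (hP.and hQ).exists
  obtain ⟨g, hg, hgF, hgP⟩ := hPc.trans hQc.symm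
  refine ⟨g, Submonoid.closure_mono ?_ hg, fun i => hgF _ (Set.mem_range_self i), hgP⟩
  rintro _ (⟨α, rfl⟩ | ⟨S, hS, rfl⟩)
  exacts [Or.inl ⟨α, fun _ => rfl⟩, Or.inr ⟨S, hS, fun _ => rfl⟩]

theorem stmt_14 (K : Type*) [Field K] [Infinite K] (s t : ℕ) (hs : 0 < s) (ht : 0 < t)
    (m : ℕ) (Pts : Fin m → K × K) (P Q : K × K)
    (hinj : Function.Injective Pts)
    (hPtsP : ∀ i, Pts i ≠ P) (hPtsQ : ∀ i, Pts i ≠ Q) (hPQ : P ≠ Q)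
    (h0 : ∀ i, Pts i ≠ 0) (hP0 : P ≠ 0) (hQ0 : Q ≠ 0) :
    ∃ g ∈ Submonoid.closure ({g : Function.End (K × K) |
        (∃ α : K, ∀ p : K × K, g p = (p.1 + α * p.2 ^ t, p.2)) ∨
        (∃ S : Polynomial K, (Polynomial.X ^ s ∣ S) ∧
          ∀ p : K × K, g p = (p.1, p.2 + S.eval p.1))}),
      (∀ i, g (Pts i) = Pts i) ∧ g P = Q :=
  stmt_14_general K s t ht m Pts P Q hPtsP hPtsQ hP0 hQ0
end
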